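/- arXiv:1211.3559 — 2 statements merged into one kernel-verified Lean document; each statement's English description precedes it below -/
import Mathlib

section
/- Let M be a free abelian group with a finite subset Π ⊆ M. Define a partial order on M by λ ≥ μ iff λ - μ is a nonnegative integer combination of elements of Π. If Π is a base of a reduced root system in M ⊗ ℚ, then for every dominant weight λ the set {μ dominant : μ ≤ λ} is finite. -/
/-!
Averaging a positive definite form over the finite group of automorphisms of `U = span Π`
that preserve the roots in `U` gives a form `( , )` invariant under the simple reflections,
hence `2 (α, x) = ⟨α∨, x⟩ (α, α)` for `α ∈ Π`. If `μ` is dominant and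
`ν = λ - μ = ∑ g_α α` with `g_α ∈ ℕ`, then
`∑ g_α² ≤ (ν, ν) = ∑ g_α (α, α) / 2 ⟨α∨, ν⟩ ≤ ∑ g_α (α, α) / 2 ⟨α∨, λ⟩`,
which bounds every `g_α`.
-/

open scoped TensorProduct Pointwise
open Module

section Stabilizer

variable {R M : Type*}

lemma finite_stabilizer_of_finite_of_span_eq_top [Semiring R] [AddCommMonoid M] [Module R M]
    {Φ : Set M} (hΦ : Φ.Finite) (hspan : Submodule.span R Φ = ⊤) :
    Finite (MulAction.stabilizer (M ≃ₗ[R] M) Φ) := by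
  have : Finite Φ := hΦ.to_subtype
  have mapsTo (e : MulAction.stabilizer (M ≃ₗ[R] M) Φ) (x : Φ) : e.1 x ∈ Φ :=
    (MulAction.mem_stabilizer_iff.1 e.2).subset (Set.smul_mem_smul_set x.2)
  refine Finite.of_injective (fun e (x : Φ) => (⟨e.1 x, mapsTo e x⟩ : Φ)) fun e e' h => ?_
  refine Subtype.ext (LinearEquiv.toLinearMap_injective (LinearMap.ext_on hspan fun x hx => ?_))
  exact congrArg Subtype.val (congrFun h ⟨x, hx⟩)

lemma Module.reflection_mem_stabilizer [CommRing R] [AddCommGroup M] [Module R M]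
    {x : M} {f : Dual R M} (hf : f x = 2) {Φ : Set M} (hΦ : Set.MapsTo (reflection hf) Φ Φ) :
    reflection hf ∈ MulAction.stabilizer (M ≃ₗ[R] M) Φ :=
  Set.image_smul.symm.trans (bijOn_reflection_of_mapsTo hf hΦ).image_eq

end Stabilizer

section InvariantForm

variable {K U ι : Type*} [CommRing K] [LinearOrder K] [IsStrictOrderedRing K]
  [AddCommGroup U] [Module K U] [Fintype ι]

lemma exists_isSymm_bilinForm_invariant (G : Subgroup (U ≃ₗ[K] U)) [Finite G]
    (b : Basis ι K U) :
    ∃ B : LinearMap.BilinForm K U, B.IsSymm ∧ (∀ x, ∑ i, b.repr x i ^ 2 ≤ B x x) ∧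
      ∀ g ∈ G, ∀ x y, B (g x) (g y) = B x y := by
  have := Fintype.ofFinite G
  let B₀ : LinearMap.BilinForm K U := ∑ i, (LinearMap.mul K K).compl₁₂ (b.coord i) (b.coord i)
  let B : LinearMap.BilinForm K U := ∑ g : G, B₀.compl₁₂ (g : U →ₗ[K] U) (g : U →ₗ[K] U)
  have hB x y : B x y = ∑ g : G, ∑ i, b.repr (g.1 x) i * b.repr (g.1 y) i := by
    simp [B, B₀, LinearMap.sum_apply]
  refine ⟨B, ⟨fun x y => ?_⟩, fun x => ?_, fun g hg x y => ?_⟩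
  · simp only [hB, mul_comm]
  · rw [hB]
    calc ∑ i, b.repr x i ^ 2 = ∑ i, b.repr ((1 : G).1 x) i * b.repr ((1 : G).1 x) i := by
          simp [sq]
      _ ≤ _ := Finset.single_le_sum (f := fun g : G => ∑ i, b.repr (g.1 x) i * b.repr (g.1 x) i)
          (fun g _ => Finset.sum_nonneg fun i _ => mul_self_nonneg _) (Finset.mem_univ 1)
  · rw [hB, hB]
    exact Fintype.sum_equiv (Equiv.mulRight ⟨g, hg⟩) _ _ fun h => by simp [LinearEquiv.mul_apply]

end InvariantForm

lemma LinearMap.BilinForm.IsSymm.two_mul_apply_eq_of_reflection_invariant {K U : Type*}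
    [CommRing K] [AddCommGroup U] [Module K U] {B : LinearMap.BilinForm K U} (hB : B.IsSymm) {α : U}
    {f : Dual K U} (hf : f α = 2) (hinv : ∀ x y, B (reflection hf x) (reflection hf y) = B x y)
    (x : U) : 2 * B α x = f x * B α α := by
  have h := hinv x α
  simp only [reflection_apply, hf, map_sub, map_smul, LinearMap.sub_apply, LinearMap.smul_apply,
    smul_eq_mul] at h
  rw [hB.eq α x]
  linear_combination -h

section Field

variable {K U ι : Type*} [Field K] [LinearOrder K] [IsStrictOrderedRing K]
  [AddCommGroup U] [Module K U] [Fintype ι]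

lemma LinearMap.BilinForm.IsSymm.sum_repr_sq_le_of_reflection_invariant
    {B : LinearMap.BilinForm K U} (hB : B.IsSymm) (b : Basis ι K U)
    (hpos : ∀ x, ∑ i, b.repr x i ^ 2 ≤ B x x) {f : ι → Dual K U} (hf : ∀ i, f i (b i) = 2)
    (hinv : ∀ i x y, B (reflection (hf i) x) (reflection (hf i) y) = B x y) (x : U) :
    ∑ i, b.repr x i ^ 2 ≤ ∑ i, b.repr x i * (B (b i) (b i) / 2 * f i x) := by
  calc ∑ i, b.repr x i ^ 2 ≤ B x x := hpos x
    _ = B (∑ i, b.repr x i • b i) x := by rw [b.sum_repr]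
    _ = ∑ i, b.repr x i * B (b i) x := by
      simp only [map_sum, map_smul, LinearMap.sum_apply, LinearMap.smul_apply, smul_eq_mul]
    _ = _ := by
      refine Finset.sum_congr rfl fun i _ => ?_
      linear_combination
        b.repr x i / 2 * hB.two_mul_apply_eq_of_reflection_invariant (hf i) (hinv i) x

end Field

lemma finite_setOf_sum_sq_le_sum_mul {K ι : Type*} [Field K] [LinearOrder K]
    [IsStrictOrderedRing K] [Archimedean K] [Fintype ι] (a : ι → K) :
    {g : ι → ℕ | ∑ i, (g i : K) ^ 2 ≤ ∑ i, g i * a i}.Finite := by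
  classical
  set C := ∑ i, a i ^ 2 / 4
  choose N hN using fun i => exists_nat_ge (a i / 2 + C + 1)
  refine (Set.finite_Iic N).subset fun g (hg : ∑ i, (g i : K) ^ 2 ≤ ∑ i, g i * a i) i => ?_
  have hsq : ∑ i, ((g i : K) - a i / 2) ^ 2 = ∑ i, (g i : K) ^ 2 - ∑ i, g i * a i + C := by
    rw [← Finset.sum_sub_distrib, ← Finset.sum_add_distrib]
    exact Finset.sum_congr rfl fun i _ => by ring
  have hi : ((g i : K) - a i / 2) ^ 2 ≤ C := by
    have := Finset.single_le_sum (fun j _ => sq_nonneg ((g j : K) - a j / 2)) (Finset.mem_univ i)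
    linarith
  have hC : 0 ≤ C := Finset.sum_nonneg fun i _ => by positivity
  have : (g i : K) ≤ N i := by nlinarith [sq_nonneg ((g i : K) - a i / 2 - 1), hN i]
  exact_mod_cast this

lemma exists_sum_sq_le_sum_mul_of_dominant {K V ι : Type*} [Field K] [LinearOrder K]
    [IsStrictOrderedRing K] [AddCommGroup V] [Module K V] [Fintype ι]
    {R : Set V} (hR : R.Finite) {b : ι → V} (hb : LinearIndependent K b) (hbR : ∀ i, b i ∈ R)
    {f : ι → Dual K V} (hf : ∀ i, f i (b i) = 2) (hfR : ∀ i, Set.MapsTo (reflection (hf i)) R R)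
    (lam : V) :
    ∃ a : ι → K, ∀ (mu : V) (g : ι → K), (∀ i, 0 ≤ g i) → (∀ i, 0 ≤ f i mu) →
      lam - mu = ∑ i, g i • b i → ∑ i, g i ^ 2 ≤ ∑ i, g i * a i := by
  -- `R` need not span `V`, so we work in `U`, where the stabiliser of the roots is finite.
  set U := Submodule.span K (Set.range b)
  let β : Basis ι K U := .span hb
  have hβ i : (β i : V) = b i := congrArg Subtype.val (Basis.span_apply hb i)
  let fU : ι → Dual K U := fun i => f i ∘ₗ U.subtype
  have hfU i : fU i (β i) = 2 := by simp [fU, hβ, hf]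
  let Φ : Set U := Subtype.val ⁻¹' R
  have hΦ : Φ.Finite := hR.preimage Subtype.val_injective.injOn
  have hspan : Submodule.span K Φ = ⊤ := by
    rw [eq_top_iff, ← β.span_eq]
    exact Submodule.span_mono
      (Set.range_subset_iff.2 fun i => show (β i : V) ∈ R from hβ i ▸ hbR i)
  have hreflΦ i : Set.MapsTo (reflection (hfU i)) Φ Φ := fun x (hx : (x : V) ∈ R) => by
    simpa [Φ, fU, hβ, reflection_apply] using hfR i hx
  have := finite_stabilizer_of_finite_of_span_eq_top hΦ hspan
  obtain ⟨B, hBsymm, hBpos, hBinv⟩ :=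
    exists_isSymm_bilinForm_invariant (MulAction.stabilizer (U ≃ₗ[K] U) Φ) β
  refine ⟨fun i => B (β i) (β i) / 2 * f i lam, fun mu g hg hmu hsum => ?_⟩
  set ν : U := ∑ i, g i • β i
  have hrepr i : β.repr ν i = g i := congrFun (β.repr_sum_self g) i
  have hν : (ν : V) = lam - mu := by simp [ν, hsum, hβ]
  have hd i : 0 ≤ B (β i) (β i) / 2 :=
    div_nonneg ((Finset.sum_nonneg fun j _ => sq_nonneg _).trans (hBpos _)) zero_le_two
  have key := hBsymm.sum_repr_sq_le_of_reflection_invariant β hBpos hfU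
    (fun i => hBinv _ (reflection_mem_stabilizer _ (hreflΦ i))) ν
  simp only [hrepr] at key
  refine key.trans (Finset.sum_le_sum fun i _ => mul_le_mul_of_nonneg_left
    (mul_le_mul_of_nonneg_left ?_ (hd i)) (hg i))
  have : fU i ν = f i lam - f i mu := by simp [fU, hν]
  linarith [hmu i]

theorem dominant_weights_below_finite_general
    {M : Type*} [AddCommGroup M]
    (Pi : Finset M) (R : Finset (ℚ ⊗[ℤ] M))
    (c : (ℚ ⊗[ℤ] M) → ((ℚ ⊗[ℤ] M) →ₗ[ℚ] ℚ))
    (hc2 : ∀ α ∈ R, c α α = 2)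
    (hrefl : ∀ α ∈ R, ∀ β ∈ R, β - (c α β) • α ∈ R)
    (hPiR : ∀ p ∈ Pi, ((1 : ℚ) ⊗ₜ[ℤ] p) ∈ R)
    (hindep : LinearIndependent ℚ (fun p : {x // x ∈ Pi} => (1 : ℚ) ⊗ₜ[ℤ] (p : M)))
    (lam : M) :
    {μ : M | (∀ p ∈ Pi, 0 ≤ c ((1 : ℚ) ⊗ₜ[ℤ] p) ((1 : ℚ) ⊗ₜ[ℤ] μ)) ∧
      ∃ g : {x // x ∈ Pi} → ℕ,
        lam - μ = ∑ p ∈ Pi.attach, (g p : ℤ) • (p : M)}.Finite := by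
  obtain ⟨a, ha⟩ := exists_sum_sq_le_sum_mul_of_dominant R.finite_toSet hindep
    (fun p => hPiR p p.2) (f := fun p => c (1 ⊗ₜ p.1)) (fun p => hc2 _ (hPiR p p.2))
    (fun p β hβ => by simpa [reflection_apply] using hrefl _ (hPiR p p.2) β hβ) (1 ⊗ₜ lam)
  refine ((finite_setOf_sum_sq_le_sum_mul a).image
    fun g => lam - ∑ p ∈ Pi.attach, (g p : ℤ) • (p : M)).subset ?_
  rintro μ ⟨hdom, g, hg⟩
  have hsum : (1 : ℚ) ⊗ₜ[ℤ] lam - 1 ⊗ₜ μ = ∑ p, (g p : ℚ) • (1 : ℚ) ⊗ₜ[ℤ] (p : M) := by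
    rw [← TensorProduct.tmul_sub, hg, TensorProduct.tmul_sum]
    simp [TensorProduct.tmul_smul, Finset.univ_eq_attach, Nat.cast_smul_eq_nsmul]
  exact ⟨g, ha _ _ (fun p => Nat.cast_nonneg _) (fun p => hdom p p.2) hsum,
    by simp only [← hg, sub_sub_cancel]⟩

/-- cf. Bourbaki VI §3 Prop. 3.  Let `M` be a free abelian group (of
finite rank) and `Π ⊆ M` a finite subset which is a base of a reduced root system `R` in
`M ⊗ ℚ` (with coroot pairing `c`): the elements of `Π` are roots, are linearly independent
over `ℚ`, every root is a nonnegative or nonpositive integer combination of `Π`, the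
pairing is integral, `⟨α, α⟩ = 2`, reflections preserve `R` and `R` is reduced.  Order `M`
by `λ ≥ μ` iff `λ - μ` is a nonnegative integer combination of `Π`, and call `μ` dominant
if `⟨α∨, μ⟩ ≥ 0` for all `α ∈ Π`.  Then for every dominant `λ` the set
`{μ dominant : μ ≤ λ}` is finite. -/
theorem dominant_weights_below_finite
    {M : Type*} [AddCommGroup M] [Module.Free ℤ M] [Module.Finite ℤ M]
    (Pi : Finset M) (R : Finset (ℚ ⊗[ℤ] M))
    (c : (ℚ ⊗[ℤ] M) → ((ℚ ⊗[ℤ] M) →ₗ[ℚ] ℚ))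
    (hne : ∀ α ∈ R, α ≠ 0)
    (hc2 : ∀ α ∈ R, c α α = 2)
    (hint : ∀ α ∈ R, ∀ β ∈ R, ∃ z : ℤ, c α β = (z : ℚ))
    (hrefl : ∀ α ∈ R, ∀ β ∈ R, β - (c α β) • α ∈ R)
    (hreduced : ∀ α ∈ R, ∀ t : ℚ, t • α ∈ R → t = 1 ∨ t = -1)
    (hPiR : ∀ p ∈ Pi, ((1 : ℚ) ⊗ₜ[ℤ] p) ∈ R)
    (hindep : LinearIndependent ℚ (fun p : {x // x ∈ Pi} => (1 : ℚ) ⊗ₜ[ℤ] (p : M)))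
    (hbase : ∀ α ∈ R, ∃ g : {x // x ∈ Pi} → ℕ,
      α = ∑ p ∈ Pi.attach, (g p : ℚ) • ((1 : ℚ) ⊗ₜ[ℤ] (p : M)) ∨
      α = -∑ p ∈ Pi.attach, (g p : ℚ) • ((1 : ℚ) ⊗ₜ[ℤ] (p : M)))
    (lam : M)
    (hlamdom : ∀ p ∈ Pi, 0 ≤ c ((1 : ℚ) ⊗ₜ[ℤ] p) ((1 : ℚ) ⊗ₜ[ℤ] lam)) :
    {μ : M | (∀ p ∈ Pi, 0 ≤ c ((1 : ℚ) ⊗ₜ[ℤ] p) ((1 : ℚ) ⊗ₜ[ℤ] μ)) ∧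
      ∃ g : {x // x ∈ Pi} → ℕ,
        lam - μ = ∑ p ∈ Pi.attach, (g p : ℤ) • (p : M)}.Finite :=
  dominant_weights_below_finite_general Pi R c hc2 hrefl hPiR hindep lam
end

section
/- Let W be a finite group acting on a free abelian group M, and k a commutative ring. Then for any k-algebra k', the natural map k[M]^W ⊗_k k' → (k'[M])^W is an isomorphism. In other words, formation of the invariant ring of the group algebra under a permutation action commutes with arbitrary base change. -/
/-!
Since `W` is finite, every `W`-orbit `O ⊆ M` is finite, so its orbit sum `∑_{λ ∈ O} e^λ` lies in
`k[M]^W`; an invariant element is constant on orbits, hence these orbit sums form a `k`-basis of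
`k[M]^W` indexed by `M/W`, independently of `k`. The base change map sends the base change of the
orbit-sum basis of `k[M]^W` to the orbit-sum basis of `k'[M]^W`, so it is an isomorphism.
-/

open scoped TensorProduct

/-- The `W`-invariants `k[M]^W` of the group algebra, where `W` acts by permuting the
canonical basis `{e^λ}` through its action on `M`. -/
def groupAlgebraInvariants (k : Type*) [CommRing k] (M : Type*) [AddCommGroup M]
    (W : Type*) [Group W] [DistribMulAction W M] :
    Submodule k (AddMonoidAlgebra k M) where
  carrier := {f | ∀ w : W, Finsupp.mapDomain (fun m => w • m) f.coeff = f.coeff}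
  add_mem' := by
    intro f g hf hg w
    rw [AddMonoidAlgebra.coeff_add, Finsupp.mapDomain_add, hf w, hg w]
  zero_mem' := by
    intro w
    rw [AddMonoidAlgebra.coeff_zero, Finsupp.mapDomain_zero]
  smul_mem' := by
    intro c f hf w
    rw [AddMonoidAlgebra.coeff_smul, Finsupp.mapDomain_smul, hf w]

open MulAction

theorem MulAction.finite_preimage_mk_orbitRel {G α : Type*} [Group G] [MulAction G α] [Finite G]
    (q : orbitRel.Quotient G α) : (Quotient.mk (orbitRel G α) ⁻¹' {q}).Finite := by
  convert Finite.finite_mulAction_orbit (M := G) q.out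
  ext a
  rw [Set.mem_preimage, Set.mem_singleton_iff, ← orbitRel.Quotient.mem_orbit,
    orbitRel.Quotient.orbit_eq_orbit_out q Quotient.out_eq']

theorem Module.Basis.equiv_baseChange_tmul {ι R A M N : Type*} [CommSemiring R] [CommSemiring A]
    [Algebra R A] [AddCommMonoid M] [Module R M] [AddCommMonoid N] [Module R N] [Module A N]
    [IsScalarTower R A N] (b : Module.Basis ι R M) (b' : Module.Basis ι A N) (φ : M →ₗ[R] N)
    (hφ : ∀ i, φ (b i) = b' i) (c : A) (x : M) :
    (b.baseChange A).equiv b' (Equiv.refl ι) (c ⊗ₜ x) = c • φ x := by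
  have : ((b.baseChange A).equiv b' (Equiv.refl ι) : A ⊗[R] M →ₗ[A] N) = φ.liftBaseChange A :=
    (b.baseChange A).ext fun i => by
      rw [LinearEquiv.coe_coe, Module.Basis.equiv_apply, Module.Basis.baseChange_apply,
        LinearMap.liftBaseChange_tmul, one_smul, hφ, Equiv.refl_apply]
  exact (LinearMap.congr_fun this (c ⊗ₜ x)).trans (φ.liftBaseChange_tmul A c x)

section

variable {k : Type*} [CommRing k] {M : Type*} [AddCommGroup M] {W : Type*} [Group W]
  [DistribMulAction W M]

theorem mem_groupAlgebraInvariants_iff {f : AddMonoidAlgebra k M} :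
    f ∈ groupAlgebraInvariants k M W ↔ ∀ (w : W) (m : M), f.coeff (w • m) = f.coeff m := by
  refine forall_congr' fun w => ⟨fun h m => ?_, fun h => ?_⟩
  · rw [← Finsupp.mapDomain_apply (MulAction.injective w) f.coeff m, h]
  · ext m
    obtain ⟨m, rfl⟩ := (MulAction.bijective w).surjective m
    exact (Finsupp.mapDomain_apply (MulAction.injective w) f.coeff m).trans (h m).symm

theorem coeff_out_eq_of_mem_groupAlgebraInvariants {f : AddMonoidAlgebra k M}
    (hf : f ∈ groupAlgebraInvariants k M W) (m : M) :
    f.coeff (Quotient.mk (orbitRel W M) m).out = f.coeff m := by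
  obtain ⟨w, hw⟩ := Quotient.mk_out (s := orbitRel W M) m
  rw [← hw, mem_groupAlgebraInvariants_iff.mp hf]

theorem AddMonoidAlgebra.map_mem_groupAlgebraInvariants {k' : Type*} [CommRing k'] (f : k →+ k')
    {x : AddMonoidAlgebra k M} (hx : x ∈ groupAlgebraInvariants k M W) :
    AddMonoidAlgebra.map f x ∈ groupAlgebraInvariants k' M W := by
  rw [mem_groupAlgebraInvariants_iff] at hx ⊢
  simp [hx]

variable (k W) (k' : Type*) [CommRing k'] [Algebra k k']

noncomputable def groupAlgebraInvariantsMap :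
    groupAlgebraInvariants k M W →ₗ[k] groupAlgebraInvariants k' M W where
  toFun f := ⟨AddMonoidAlgebra.mapAlgHom M (Algebra.ofId k k') f,
    AddMonoidAlgebra.map_mem_groupAlgebraInvariants _ f.2⟩
  map_add' _ _ := Subtype.ext (map_add _ _ _)
  map_smul' _ _ := Subtype.ext (map_smul _ _ _)

variable [Finite W]

noncomputable def groupAlgebraInvariantsEquivFinsupp :
    groupAlgebraInvariants k M W ≃ₗ[k] (orbitRel.Quotient W M →₀ k) where
  toFun f := Finsupp.comapDomain Quotient.out (f : AddMonoidAlgebra k M).coeff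
    Quotient.out_injective.injOn
  map_add' _ _ := by ext; rfl
  map_smul' _ _ := by ext; rfl
  invFun g := ⟨.ofCoeff <| .ofSupportFinite (g ∘ Quotient.mk _)
      (g.hasFiniteSupport.preimage' fun q _ => finite_preimage_mk_orbitRel q), by
    rw [mem_groupAlgebraInvariants_iff]
    intro w m
    exact congrArg g (Quotient.sound (mem_orbit m w))⟩
  left_inv f := by
    ext m
    exact coeff_out_eq_of_mem_groupAlgebraInvariants f.2 m
  right_inv g := by
    ext q
    exact congrArg g (Quotient.out_eq q)

noncomputable def groupAlgebraInvariantsBasis :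
    Module.Basis (orbitRel.Quotient W M) k (groupAlgebraInvariants k M W) :=
  .ofRepr (groupAlgebraInvariantsEquivFinsupp k W)

theorem coeff_groupAlgebraInvariantsBasis (q : orbitRel.Quotient W M) (m : M) :
    (groupAlgebraInvariantsBasis k W q : AddMonoidAlgebra k M).coeff m =
      Finsupp.single q 1 (Quotient.mk _ m) :=
  rfl

theorem groupAlgebraInvariantsMap_basis (q : orbitRel.Quotient W M) :
    groupAlgebraInvariantsMap k W k' (groupAlgebraInvariantsBasis k W q) =
      groupAlgebraInvariantsBasis k' W q := by
  ext m
  simp only [groupAlgebraInvariantsMap, LinearMap.coe_mk, AddHom.coe_mk,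
    AddMonoidAlgebra.coeff_mapAlgHom, coeff_groupAlgebraInvariantsBasis]
  rw [← Finsupp.mapRange_apply (hf := map_zero _), Finsupp.mapRange_single, map_one]

end

theorem groupAlgebraInvariants_baseChange_general
    (k : Type*) [CommRing k] (M : Type*) [AddCommGroup M]
    (W : Type*) [Group W] [Finite W] [DistribMulAction W M]
    (k' : Type*) [CommRing k'] [Algebra k k'] :
    ∃ e : k' ⊗[k] (groupAlgebraInvariants k M W) ≃ₗ[k'] groupAlgebraInvariants k' M W,
      ∀ (c : k') (f : groupAlgebraInvariants k M W),
        (e (c ⊗ₜ f) : AddMonoidAlgebra k' M) =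
          c • AddMonoidAlgebra.ofCoeff
            (Finsupp.mapRange (algebraMap k k') (map_zero _) (f : AddMonoidAlgebra k M).coeff) := by
  refine ⟨((groupAlgebraInvariantsBasis k W).baseChange k').equiv
    (groupAlgebraInvariantsBasis k' W) (Equiv.refl _), fun c f => ?_⟩
  rw [Module.Basis.equiv_baseChange_tmul _ _ _ (groupAlgebraInvariantsMap_basis k W k') c f]
  rfl

/-- Formation of the invariant ring of a group algebra under a permutation
action commutes with arbitrary base change: for a finite group `W` acting on a free abelian
group `M`, a commutative ring `k` and any `k`-algebra `k'`, the natural base change map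
`k' ⊗_k (k[M]^W) → (k'[M])^W`, sending `c ⊗ f` to `c • (f` with coefficients pushed along
`k → k')`, is an isomorphism. -/
theorem groupAlgebraInvariants_baseChange
    (k : Type*) [CommRing k] (M : Type*) [AddCommGroup M] [Module.Free ℤ M]
    (W : Type*) [Group W] [Finite W] [DistribMulAction W M]
    (k' : Type*) [CommRing k'] [Algebra k k'] :
    ∃ e : k' ⊗[k] (groupAlgebraInvariants k M W) ≃ₗ[k'] groupAlgebraInvariants k' M W,
      ∀ (c : k') (f : groupAlgebraInvariants k M W),
        (e (c ⊗ₜ f) : AddMonoidAlgebra k' M) =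
          c • AddMonoidAlgebra.ofCoeff
            (Finsupp.mapRange (algebraMap k k') (map_zero _) (f : AddMonoidAlgebra k M).coeff) :=
  groupAlgebraInvariants_baseChange_general k M W k'
end
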